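/- The parameterized ADN statement implies the recursion theorem with parameters: if for every binary partial computable FPF⁺ function δ and every partial computable ψ there exists a total computable f totalizing ψ and avoiding δ (in the parameterized sense), then for every total computable binary h there is a total computable g with φ_{g(n)} = φ_{h(n,g(n))} for all n. -/

import Mathlib

/-!
Argue by contraposition: if `h` has no computable fixed-point function `g`, then the total
function `δ n a = h n a` is FPF⁺. Applying the parameterized ADN statement to this `δ` and to the
nowhere-defined `ψ` yields an `f` for which `δ n (f n)` must diverge, which is absurd for a total
`δ`.
-/

open Nat.Partrec (Code)

/-- The `e`-th partial computable function, via the standard numbering of codes. -/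
def phi (e : ℕ) : ℕ →. ℕ := (Denumerable.ofNat Code e).eval

/-- `W e` is the domain of the `e`-th partial computable function. -/
def W (e : ℕ) : Set ℕ := {n | (phi e n).Dom}

/-- The halting set ∅'. -/
def K0 : Set ℕ := {e | (phi e e).Dom}

/-- Characteristic function of a set of naturals. -/
noncomputable def chi (A : Set ℕ) : ℕ → ℕ := A.indicator 1

/-- Partial recursiveness relative to an oracle `O : ℕ → ℕ`. -/
inductive OracleRecursiveIn (O : ℕ → ℕ) : (ℕ →. ℕ) → Prop
  | zero : OracleRecursiveIn O (pure 0)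
  | succ : OracleRecursiveIn O Nat.succ
  | left : OracleRecursiveIn O fun n => (Nat.unpair n).1
  | right : OracleRecursiveIn O fun n => (Nat.unpair n).2
  | oracle : OracleRecursiveIn O fun n => Part.some (O n)
  | pair {f g} : OracleRecursiveIn O f → OracleRecursiveIn O g →
      OracleRecursiveIn O fun n => Nat.pair <$> f n <*> g n
  | comp {f g} : OracleRecursiveIn O f → OracleRecursiveIn O g →
      OracleRecursiveIn O fun n => g n >>= f
  | prec {f g} : OracleRecursiveIn O f → OracleRecursiveIn O g →
      OracleRecursiveIn O (Nat.unpaired fun a n =>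
        n.rec (f a) fun y IH => do
          let i ← IH
          g (Nat.pair a (Nat.pair y i)))
  | rfind {f} : OracleRecursiveIn O f →
      OracleRecursiveIn O fun a =>
        Nat.rfind fun n => (fun m => m = 0) <$> f (Nat.pair a n)

/-- A total function `f` is Turing reducible to the set `A`. -/
def FuncRecIn (A : Set ℕ) (f : ℕ → ℕ) : Prop :=
  OracleRecursiveIn (chi A) fun n => Part.some (f n)

/-- A binary total function `h` is Turing reducible to the set `A`. -/
def Func2RecIn (A : Set ℕ) (h : ℕ → ℕ → ℕ) : Prop :=
  OracleRecursiveIn (chi A) fun n => Part.some (h (Nat.unpair n).1 (Nat.unpair n).2)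

/-- Turing reducibility between sets of naturals. -/
def SetRecIn (A B : Set ℕ) : Prop := OracleRecursiveIn (chi B) fun n => Part.some (chi A n)

/-- `A` is computably enumerable. -/
def CE (A : Set ℕ) : Prop := REPred (· ∈ A)

/-- Codes for oracle machines. -/
inductive OCode : Type
  | zero | succ | left | right | oracle
  | pair (cf cg : OCode)
  | comp (cf cg : OCode)
  | prec (cf cg : OCode)
  | rfind' (cf : OCode)

/-- Evaluation of oracle codes relative to an oracle `O`. -/
def OCode.evalo (O : ℕ → ℕ) : OCode → ℕ →. ℕ
  | .zero => pure 0
  | .succ => Nat.succ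
  | .left => fun n => Part.some (Nat.unpair n).1
  | .right => fun n => Part.some (Nat.unpair n).2
  | .oracle => fun n => Part.some (O n)
  | .pair cf cg => fun n => Nat.pair <$> evalo O cf n <*> evalo O cg n
  | .comp cf cg => fun n => evalo O cg n >>= evalo O cf
  | .prec cf cg => Nat.unpaired fun a n =>
      n.rec (evalo O cf a) fun y IH => do
        let i ← IH
        evalo O cg (Nat.pair a (Nat.pair y i))
  | .rfind' cf => Nat.unpaired fun a m =>
      (Nat.rfind fun n => (fun x => x = 0) <$> evalo O cf (Nat.pair a (n + m))).map (· + m)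

/-- A standard numbering of oracle codes. -/
def OCode.ofNat : ℕ → OCode
  | 0 => .zero
  | 1 => .succ
  | 2 => .left
  | 3 => .right
  | 4 => .oracle
  | n + 5 =>
    let m := n.div2.div2
    have hm : m < n + 5 := by
      simp only [m, Nat.div2_val]
      exact lt_of_le_of_lt (le_trans (Nat.div_le_self _ _) (Nat.div_le_self _ _))
        (by omega)
    have _m1 : m.unpair.1 < n + 5 := lt_of_le_of_lt m.unpair_left_le hm
    have _m2 : m.unpair.2 < n + 5 := lt_of_le_of_lt m.unpair_right_le hm
    match n.bodd, n.div2.bodd with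
    | false, false => .pair (ofNat m.unpair.1) (ofNat m.unpair.2)
    | false, true  => .comp (ofNat m.unpair.1) (ofNat m.unpair.2)
    | true , false => .prec (ofNat m.unpair.1) (ofNat m.unpair.2)
    | true , true  => .rfind' (ofNat m)
  decreasing_by all_goals first | exact _m1 | exact _m2 | exact hm

/-- The Turing jump of an oracle `O : ℕ → ℕ`. -/
def jump (O : ℕ → ℕ) : Set ℕ := {e | (OCode.evalo O (OCode.ofNat e) e).Dom}

/-- A binary partial function `δ` is FPF⁺. -/
def FPFplus (δ : ℕ → ℕ →. ℕ) : Prop :=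
  ∀ g : ℕ → ℕ, Computable g → ∃ n, ∀ a ∈ δ n (g n), phi (g n) ≠ phi a

def ParamADN : Prop :=
  ∀ δ : ℕ → ℕ →. ℕ, Partrec₂ δ → FPFplus δ →
    ∀ ψ : ℕ →. ℕ, Nat.Partrec ψ →
      ∃ f : ℕ → ℕ, Computable f ∧
        (∀ n, ∀ a ∈ ψ n, W (f n) = W a) ∧
        (∀ n, ¬ (ψ n).Dom → ¬ (δ n (f n)).Dom)

theorem ParamADN.exists_not_dom (hADN : ParamADN) {δ : ℕ → ℕ →. ℕ} (hδ : Partrec₂ δ)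
    (hfpf : FPFplus δ) : ∃ n a, ¬ (δ n a).Dom := by
  obtain ⟨f, -, -, havoid⟩ := hADN δ hδ hfpf (fun _ => Part.none) Nat.Partrec.none
  exact ⟨0, f 0, havoid 0 Part.not_none_dom⟩

theorem fpfPlus_some_iff {h : ℕ → ℕ → ℕ} :
    FPFplus (fun n a => Part.some (h n a)) ↔
      ∀ g : ℕ → ℕ, Computable g → ∃ n, phi (g n) ≠ phi (h n (g n)) := by
  simp only [FPFplus, Part.mem_some_iff, forall_eq]

/-- The parameterized ADN statement implies the recursion theorem with parameters. -/
theorem adn_param_implies_recursion_param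
    (H : ∀ δ : ℕ → ℕ →. ℕ, Partrec₂ δ → FPFplus δ →
      ∀ ψ : ℕ →. ℕ, Nat.Partrec ψ →
        ∃ f : ℕ → ℕ, Computable f ∧
          (∀ n, ∀ a ∈ ψ n, W (f n) = W a) ∧
          (∀ n, ¬ (ψ n).Dom → ¬ (δ n (f n)).Dom)) :
    ∀ h : ℕ → ℕ → ℕ, Computable₂ h →
      ∃ g : ℕ → ℕ, Computable g ∧ ∀ n, phi (g n) = phi (h n (g n)) := by
  intro h hh
  by_contra! hno
  obtain ⟨n, a, hdiv⟩ :=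
    ParamADN.exists_not_dom H hh.partrec₂ (fpfPlus_some_iff.2 hno)
  exact hdiv trivial
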